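/- arXiv:0707.2591 — 10 statements merged into one kernel-verified Lean document; each statement's English description precedes it below -/
import Mathlib

section
/- Let f(x) = min_{r ≤ i ≤ n} (a_i + i·x) with a_i ∈ ℚ. If there is no x₀ ∈ ℚ with f(x₀) = a_i + i·x₀ (for some fixed index i), then there exists b < a_i such that the function g obtained by replacing a_i with b satisfies g(x) = f(x) for all x ∈ ℚ. -/
/-! The term `a i + i x` misses the minimum everywhere exactly when the point `(i, a i)` lies
strictly above a chord of the Newton polygon: there are `p < i < q` whose terms cross below it,
i.e. `(q - p) a i > (q - i) a p + (i - p) a q`. Otherwise the crossing points of line `i` with the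
lines `q > i` all lie left of its crossing points with the lines `p < i`, and any point between
them is one where term `i` attains the minimum. Conversely, lowering `a i` to the value of the
chord at `i` makes term `i` a convex combination of terms `p` and `q`, hence never smaller than
both of them, so the minimum is unchanged. -/

open Finset

theorem Finset.exists_between_of_forall_le {ι α : Type*} [LinearOrder α] [Nonempty α]
    (A B : Finset ι) (f g : ι → α) (h : ∀ j ∈ A, ∀ k ∈ B, f j ≤ g k) :
    ∃ x, (∀ j ∈ A, f j ≤ x) ∧ ∀ k ∈ B, x ≤ g k := by
  rcases B.eq_empty_or_nonempty with rfl | hB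
  · obtain ⟨M, hM⟩ := (A.image f).exists_le
    exact ⟨M, fun j hj => hM _ (mem_image_of_mem f hj), by simp⟩
  · obtain ⟨k₀, hk₀, hk₀_eq⟩ := B.exists_mem_eq_inf' hB g
    exact ⟨B.inf' hB g, fun j hj => hk₀_eq ▸ h j hj k₀ hk₀, fun k hk => inf'_le g hk⟩

theorem Finset.inf'_update_eq_of_exists_le {ι α : Type*} [DecidableEq ι] [LinearOrder α]
    {s : Finset ι} (hs : s.Nonempty) (f : ι → α) (i : ι) {v : α} (hv : v ≤ f i)
    (hlow : ∃ j ∈ s, j ≠ i ∧ f j ≤ v) :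
    s.inf' hs (Function.update f i v) = s.inf' hs f := by
  obtain ⟨j, hj, hji, hfj⟩ := hlow
  refine le_antisymm (le_inf' _ _ fun k hk => ?_) (le_inf' _ _ fun k hk => ?_)
  · rcases eq_or_ne k i with rfl | hki
    · exact inf'_le_of_le _ hk (by simpa using hv)
    · exact inf'_le_of_le _ hk (by simp [hki])
  · rcases eq_or_ne k i with rfl | hki
    · exact inf'_le_of_le _ hj (by simpa [hji] using hfj)
    · exact inf'_le_of_le _ hk (by simp [hki])

section Lines

variable {K : Type*} [Field K] [LinearOrder K] [IsStrictOrderedRing K]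

theorem add_mul_le_add_mul_iff_div_le {α β u v x : K} (huv : u < v) :
    α + u * x ≤ β + v * x ↔ (α - β) / (v - u) ≤ x := by
  rw [div_le_iff₀ (sub_pos.2 huv)]
  constructor <;> intro <;> linarith

theorem add_mul_le_add_mul_iff_le_div {α β u v x : K} (huv : u < v) :
    β + v * x ≤ α + u * x ↔ x ≤ (α - β) / (v - u) := by
  rw [le_div_iff₀ (sub_pos.2 huv)]
  constructor <;> intro <;> linarith

theorem le_or_le_of_chord {p i q ap aq b x : K} (hpi : p < i) (hiq : i < q)
    (hb : (q - p) * b = (q - i) * ap + (i - p) * aq) :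
    ap + p * x ≤ b + i * x ∨ aq + q * x ≤ b + i * x := by
  by_contra! hlt
  have hp := mul_lt_mul_of_pos_left hlt.1 (sub_pos.2 hiq)
  have hq := mul_lt_mul_of_pos_left hlt.2 (sub_pos.2 hpi)
  linarith

end Lines

section TropicalPolynomial

variable {K : Type*} [Field K] [LinearOrder K] [IsStrictOrderedRing K]
  {s : Finset ℤ} (hs : s.Nonempty) (a : ℤ → K) {i : ℤ}

theorem exists_inf'_eq_of_forall_chord_le (hi : i ∈ s)
    (hchord : ∀ p ∈ s, ∀ q ∈ s, p < i → i < q →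
      ((q : K) - p) * a i ≤ ((q : K) - i) * a p + ((i : K) - p) * a q) :
    ∃ x₀ : K, s.inf' hs (fun j => a j + (j : K) * x₀) = a i + (i : K) * x₀ := by
  have hcross : ∀ q ∈ s.filter (i < ·), ∀ p ∈ s.filter (· < i),
      (a i - a q) / ((q : K) - i) ≤ (a p - a i) / ((i : K) - p) := by
    intro q hq p hp
    rw [mem_filter] at hq hp
    have hpi : (p : K) < i := by exact_mod_cast hp.2
    have hiq : (i : K) < q := by exact_mod_cast hq.2
    rw [div_le_div_iff₀ (sub_pos.2 hiq) (sub_pos.2 hpi)]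
    linarith [hchord p hp.1 q hq.1 hp.2 hq.2]
  obtain ⟨x₀, hright, hleft⟩ := exists_between_of_forall_le _ _ _ _ hcross
  refine ⟨x₀, le_antisymm (inf'_le _ hi) (le_inf' _ _ fun j hj => ?_)⟩
  rcases lt_trichotomy j i with hji | rfl | hij
  · exact (add_mul_le_add_mul_iff_le_div (Int.cast_lt.2 hji)).2
      (hleft j (mem_filter.2 ⟨hj, hji⟩))
  · exact le_rfl
  · exact (add_mul_le_add_mul_iff_div_le (Int.cast_lt.2 hij)).2
      (hright j (mem_filter.2 ⟨hj, hij⟩))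

theorem exists_chord_lt_of_forall_inf'_ne (hi : i ∈ s)
    (h : ∀ x₀ : K, s.inf' hs (fun j => a j + (j : K) * x₀) ≠ a i + (i : K) * x₀) :
    ∃ p ∈ s, ∃ q ∈ s, p < i ∧ i < q ∧
      ((q : K) - i) * a p + ((i : K) - p) * a q < ((q : K) - p) * a i := by
  by_contra! hchord
  obtain ⟨x₀, hx₀⟩ := exists_inf'_eq_of_forall_chord_le hs a hi hchord
  exact h x₀ hx₀

theorem exists_lt_forall_inf'_update_eq_of_chord_lt {p q : ℤ} (hp : p ∈ s) (hq : q ∈ s)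
    (hpi : p < i) (hiq : i < q)
    (hchord : ((q : K) - i) * a p + ((i : K) - p) * a q < ((q : K) - p) * a i) :
    ∃ b : K, b < a i ∧ ∀ x : K,
      s.inf' hs (fun j => Function.update a i b j + (j : K) * x) =
        s.inf' hs (fun j => a j + (j : K) * x) := by
  have hpi' : (p : K) < i := Int.cast_lt.2 hpi
  have hiq' : (i : K) < q := Int.cast_lt.2 hiq
  have hqp : (0 : K) < q - p := by linarith
  set b := (((q : K) - i) * a p + ((i : K) - p) * a q) / ((q : K) - p) with hb_def
  have hb : ((q : K) - p) * b = ((q : K) - i) * a p + ((i : K) - p) * a q := by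
    rw [hb_def]; field_simp
  have hba : b < a i := by rw [hb_def, div_lt_iff₀ hqp]; linarith
  refine ⟨b, hba, fun x => ?_⟩
  simp_rw [Function.apply_update (fun (j : ℤ) (c : K) => c + (j : K) * x)]
  refine inf'_update_eq_of_exists_le hs _ i (by linarith) ?_
  rcases le_or_le_of_chord (x := x) hpi' hiq' hb with hpx | hqx
  · exact ⟨p, hp, hpi.ne, hpx⟩
  · exact ⟨q, hq, hiq.ne', hqx⟩

end TropicalPolynomial

/-- If `a i` is not a least coefficient of the tropical polynomial, then it can be
lowered to some `b < a i` without changing the function. -/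
theorem not_least_coeff_can_be_lowered (r n : ℤ) (hrn : r ≤ n) (a : ℤ → ℚ)
    (i : ℤ) (hi : i ∈ Finset.Icc r n)
    (h : ¬ ∃ x₀ : ℚ, (Finset.Icc r n).inf' (Finset.nonempty_Icc.mpr hrn)
      (fun j => a j + (j : ℚ) * x₀) = a i + (i : ℚ) * x₀) :
    ∃ b : ℚ, b < a i ∧ ∀ x : ℚ,
      (Finset.Icc r n).inf' (Finset.nonempty_Icc.mpr hrn)
        (fun j => Function.update a i b j + (j : ℚ) * x) =
      (Finset.Icc r n).inf' (Finset.nonempty_Icc.mpr hrn)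
        (fun j => a j + (j : ℚ) * x) := by
  obtain ⟨p, hp, q, hq, hpi, hiq, hchord⟩ :=
    exists_chord_lt_of_forall_inf'_ne _ a hi (not_exists.mp h)
  exact exists_lt_forall_inf'_update_eq_of_chord_lt _ a hp hq hpi hiq hchord
end

section
/- Two least-coefficient tropical polynomials (with the same index range r, ..., n and finite rational coefficients) are functionally equivalent if and only if they have equal coefficients. That is, if every coefficient of f and of g is a least coefficient and f(x) = g(x) for all x ∈ ℚ, then a_i = b_i for all i. -/
theorem Finset.le_of_inf'_add_eq_inf'_add {ι α : Type*} [AddCommGroup α]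
    [LinearOrder α] [IsOrderedAddMonoid α] {s : Finset ι} (H : s.Nonempty) {a b c : ι → α}
    (hab : s.inf' H (fun i => a i + c i) = s.inf' H (fun i => b i + c i)) {j : ι} (hj : j ∈ s)
    (ha : s.inf' H (fun i => a i + c i) = a j + c j) : a j ≤ b j :=
  le_of_add_le_add_right <| calc
    a j + c j = s.inf' H (fun i => b i + c i) := ha.symm.trans hab
    _ ≤ b j + c j := Finset.inf'_le _ hj

/-- Two least-coefficient tropical polynomials are functionally equivalent
iff they have equal coefficients. -/
theorem least_coeff_poly_funext_iff_eq (r n : ℤ) (hrn : r ≤ n) (a b : ℤ → ℚ)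
    (ha : ∀ j ∈ Finset.Icc r n, ∃ x₀ : ℚ,
      (Finset.Icc r n).inf' (Finset.nonempty_Icc.mpr hrn)
        (fun i => a i + (i : ℚ) * x₀) = a j + (j : ℚ) * x₀)
    (hb : ∀ j ∈ Finset.Icc r n, ∃ x₀ : ℚ,
      (Finset.Icc r n).inf' (Finset.nonempty_Icc.mpr hrn)
        (fun i => b i + (i : ℚ) * x₀) = b j + (j : ℚ) * x₀) :
    (∀ x : ℚ,
      (Finset.Icc r n).inf' (Finset.nonempty_Icc.mpr hrn)
        (fun i => a i + (i : ℚ) * x) =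
      (Finset.Icc r n).inf' (Finset.nonempty_Icc.mpr hrn)
        (fun i => b i + (i : ℚ) * x)) ↔
    (∀ j ∈ Finset.Icc r n, a j = b j) := by
  refine ⟨fun hfun j hj => ?_, fun hcoef x => Finset.inf'_congr _ rfl fun j hj => by rw [hcoef j hj]⟩
  obtain ⟨x, hx⟩ := ha j hj
  obtain ⟨y, hy⟩ := hb j hj
  exact le_antisymm (Finset.le_of_inf'_add_eq_inf'_add _ (hfun x) hj hx)
    (Finset.le_of_inf'_add_eq_inf'_add _ (hfun y).symm hj hy)
end

section
/- Given a tropical polynomial f with coefficients a_r, ..., a_n ∈ ℚ, define b_j = min( {a_j} ∪ { (a_i·(k−j) + a_k·(j−i))/(k−i) : r ≤ i < j < k ≤ n } ). Then the tropical polynomial g with coefficients b_r, ..., b_n is functionally equivalent to f: for all x ∈ ℚ, min_i (b_i + i·x) = min_i (a_i + i·x). -/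
/-!
Every candidate value for `b_j` either is `a_j` or lies on the chord through `(i, a_i)` and
`(k, a_k)` with `i < j < k`, so `b_j + j x` is a convex combination of `a_i + i x` and
`a_k + k x` and hence at least `min_i (a_i + i x)`. Since also `b_j ≤ a_j`, the two minima agree.
-/

lemma chord_add_mul_eq {K : Type*} [Field K] {i j k : K} (hik : i ≠ k) (u v x : K) :
    (u * (k - j) + v * (j - i)) / (k - i) + j * x =
      ((u + i * x) * (k - j) + (v + k * x) * (j - i)) / (k - i) := by
  have : k - i ≠ 0 := sub_ne_zero.mpr hik.symm
  field_simp
  ring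

lemma le_chord_add_mul {K : Type*} [Field K] [LinearOrder K] [IsStrictOrderedRing K]
    {i j k u v m : K} (x : K) (hij : i < j) (hjk : j < k)
    (hu : m ≤ u + i * x) (hv : m ≤ v + k * x) :
    m ≤ (u * (k - j) + v * (j - i)) / (k - i) + j * x := by
  have hik : 0 < k - i := by linarith
  rw [chord_add_mul_eq (hij.trans hjk).ne, le_div_iff₀ hik]
  linarith [mul_le_mul_of_nonneg_right hu (sub_nonneg.mpr hjk.le),
    mul_le_mul_of_nonneg_right hv (sub_nonneg.mpr hij.le)]

lemma Finset.inf'_eq_of_le_of_inf'_le {ι α : Type*} [SemilatticeInf α] {s : Finset ι}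
    (hs : s.Nonempty) {f g : ι → α} (hgf : ∀ j ∈ s, g j ≤ f j)
    (hfg : ∀ j ∈ s, s.inf' hs f ≤ g j) : s.inf' hs g = s.inf' hs f :=
  le_antisymm (Finset.inf'_mono_fun hgf) (Finset.le_inf' _ _ hfg)

/-- The least-coefficient formula gives a functionally equivalent polynomial. -/
theorem lcp_formula_funequiv (r n : ℤ) (hrn : r ≤ n) (a b : ℤ → ℚ)
    (hb : ∀ j ∈ Finset.Icc r n, b j =
      (insert (a j)
        ((((Finset.Icc r n) ×ˢ (Finset.Icc r n)).filter
            (fun p => p.1 < j ∧ j < p.2)).image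
          (fun p : ℤ × ℤ =>
            (a p.1 * ((p.2 : ℚ) - (j : ℚ)) + a p.2 * ((j : ℚ) - (p.1 : ℚ))) /
              ((p.2 : ℚ) - (p.1 : ℚ))))).min'
        (Finset.insert_nonempty _ _)) :
    ∀ x : ℚ,
      (Finset.Icc r n).inf' (Finset.nonempty_Icc.mpr hrn)
        (fun i => b i + (i : ℚ) * x) =
      (Finset.Icc r n).inf' (Finset.nonempty_Icc.mpr hrn)
        (fun i => a i + (i : ℚ) * x) := by
  intro x
  set s := Finset.Icc r n
  set m := s.inf' (Finset.nonempty_Icc.mpr hrn) (fun i => a i + (i : ℚ) * x)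
  have hm : ∀ i ∈ s, m ≤ a i + (i : ℚ) * x := fun i hi => Finset.inf'_le _ hi
  refine Finset.inf'_eq_of_le_of_inf'_le _ (fun j hj => ?_) (fun j hj => ?_)
  · have hba : b j ≤ a j := hb j hj ▸ Finset.min'_le _ _ (Finset.mem_insert_self _ _)
    linarith
  · suffices m - j * x ≤ b j by linarith
    rw [hb j hj]
    refine Finset.le_min' _ _ _ fun y hy => ?_
    rcases Finset.mem_insert.mp hy with rfl | hy
    · linarith [hm j hj]
    · obtain ⟨⟨i, k⟩, hp, rfl⟩ := Finset.mem_image.mp hy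
      obtain ⟨⟨hi, hk⟩, hij, hjk⟩ := by simpa only [Finset.mem_filter, Finset.mem_product] using hp
      have := le_chord_add_mul x (Int.cast_lt.mpr hij) (Int.cast_lt.mpr hjk) (hm i hi) (hm k hk)
      linarith
end

section
/- Every tropical polynomial function has a unique least-coefficient representative: for any coefficients a_r, ..., a_n ∈ ℚ there exists exactly one tuple b_r, ..., b_n ∈ ℚ such that all b_j are least coefficients of the polynomial they define and min_i (b_i + i·x) = min_i (a_i + i·x) for all x ∈ ℚ. -/
/-!
Write `f x = min_i (a_i + i x)`. For each index `j` the concave function `x ↦ f x - j x` attains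
its maximum, at `X_j` say, and the least-coefficient representative is `b_j := f X_j - j X_j`:
then `f ≤ b_j + j x` everywhere with equality at `X_j`, and `b_j ≤ a_j`, so `b` defines `f` and
every `b_j` is least. Uniqueness is symmetric: if `b_j` is least at `x₁` and `b'` defines the same
function, then `b_j + j x₁ = f x₁ ≤ b'_j + j x₁`.

The maximum exists because `f x - j x` is a minimum of nondecreasing and nonincreasing affine
functions. Its supremum `W` is the least, over pairs of a nondecreasing and a nonincreasing line,
of the maximum of their minimum; the sets `{x | W ≤ line}` are rays that meet pairwise, hence
have a common point.
-/

open Finset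

theorem exists_forall_mem_upper_lower {α ι : Type*} [LinearOrder α] {P Q : Finset ι}
    (hP : P.Nonempty) (hQ : Q.Nonempty) {U L : ι → Set α} (hU : ∀ p ∈ P, IsUpperSet (U p))
    (hL : ∀ q ∈ Q, IsLowerSet (L q)) (h : ∀ p ∈ P, ∀ q ∈ Q, (U p ∩ L q).Nonempty) :
    ∃ x, (∀ p ∈ P, x ∈ U p) ∧ ∀ q ∈ Q, x ∈ L q := by
  obtain ⟨p₀, hp₀⟩ := hP
  obtain ⟨q₀, hq₀⟩ := hQ
  have : Nonempty α := ⟨(h p₀ hp₀ q₀ hq₀).some⟩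
  choose! z hzU hzL using h
  -- the point is `max_p min_q z p q`
  set y : ι → α := fun p => Q.inf' ⟨q₀, hq₀⟩ (z p)
  have hyU : ∀ p ∈ P, y p ∈ U p := fun p hp => by
    obtain ⟨q, hq, hyq⟩ := Q.exists_mem_eq_inf' ⟨q₀, hq₀⟩ (z p)
    have hyq : y p = z p q := hyq
    exact hyq ▸ hzU p hp q hq
  have hyL : ∀ p ∈ P, ∀ q ∈ Q, y p ∈ L q := fun p hp q hq =>
    hL q hq (inf'_le _ hq) (hzL p hp q hq)
  obtain ⟨p, hp, hyp⟩ := P.exists_mem_eq_sup' ⟨p₀, hp₀⟩ y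
  exact ⟨y p, fun p' hp' => hU p' hp' (hyp ▸ le_sup' y hp') (hyU p' hp'), hyL p hp⟩

section Affine

variable {𝕜 ι : Type*} [Field 𝕜] [LinearOrder 𝕜] [IsStrictOrderedRing 𝕜]

theorem exists_forall_min_affine_le (c₁ c₂ m₁ m₂ : 𝕜) (h₁ : 0 ≤ m₁) (h₂ : m₂ ≤ 0) :
    ∃ x, ∀ y, min (c₁ + m₁ * y) (c₂ + m₂ * y) ≤ min (c₁ + m₁ * x) (c₂ + m₂ * x) := by
  rcases (h₂.trans h₁).eq_or_lt with h | h
  · have hm₁ : m₁ = 0 := le_antisymm (h ▸ h₂) h₁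
    have hm₂ : m₂ = 0 := h.trans hm₁
    exact ⟨0, fun y => by simp [hm₁, hm₂]⟩
  · set x := (c₂ - c₁) / (m₁ - m₂)
    have hcross : c₁ + m₁ * x = c₂ + m₂ * x := by
      simp only [x]
      field_simp
      ring
    refine ⟨x, fun y => ?_⟩
    rw [← hcross, min_self]
    rcases le_total y x with hy | hy
    · exact min_le_of_left_le (by gcongr)
    · exact min_le_of_right_le (hcross ▸ by nlinarith)

theorem exists_forall_inf'_affine_le (S : Finset ι) (hS : S.Nonempty) (c m : ι → 𝕜)
    (hP : ∃ p ∈ S, 0 ≤ m p) (hQ : ∃ q ∈ S, m q ≤ 0) :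
    ∃ x₀, ∀ x, S.inf' hS (fun i => c i + m i * x) ≤ S.inf' hS (fun i => c i + m i * x₀) := by
  classical
  set P := S.filter (0 ≤ m ·)
  set Q := S.filter (m · ≤ 0)
  have hPne : P.Nonempty := by
    obtain ⟨p, hp, hmp⟩ := hP
    exact ⟨p, mem_filter.2 ⟨hp, hmp⟩⟩
  have hQne : Q.Nonempty := by
    obtain ⟨q, hq, hmq⟩ := hQ
    exact ⟨q, mem_filter.2 ⟨hq, hmq⟩⟩
  have hpair : ∀ p ∈ P, ∀ q ∈ Q, ∃ x, ∀ y,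
      min (c p + m p * y) (c q + m q * y) ≤ min (c p + m p * x) (c q + m q * x) :=
    fun p hp q hq => exists_forall_min_affine_le _ _ _ _ (mem_filter.1 hp).2 (mem_filter.1 hq).2
  choose! z hz using hpair
  set W := P.inf' hPne fun p => Q.inf' hQne fun q => min (c p + m p * z p q) (c q + m q * z p q)
  have hW_le : ∀ p ∈ P, ∀ q ∈ Q, W ≤ min (c p + m p * z p q) (c q + m q * z p q) :=
    fun p hp q hq => (inf'_le _ hp).trans (inf'_le _ hq)
  have hle_W : ∀ x, S.inf' hS (fun i => c i + m i * x) ≤ W := fun x =>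
    le_inf' _ _ fun p hp => le_inf' _ _ fun q hq =>
      (le_min (inf'_le _ (mem_filter.1 hp).1) (inf'_le _ (mem_filter.1 hq).1)).trans (hz p hp q hq x)
  obtain ⟨x₀, hx₀P, hx₀Q⟩ := exists_forall_mem_upper_lower hPne hQne
    (U := fun i => {x | W ≤ c i + m i * x}) (L := fun i => {x | W ≤ c i + m i * x})
    (fun p hp x y hxy hx => hx.trans (by have := (mem_filter.1 hp).2; gcongr))
    (fun q hq x y hxy hx => hx.trans (by have := (mem_filter.1 hq).2; nlinarith))
    (fun p hp q hq => ⟨z p q, (hW_le p hp q hq).trans (min_le_left _ _),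
      (hW_le p hp q hq).trans (min_le_right _ _)⟩)
  refine ⟨x₀, fun x => (hle_W x).trans (le_inf' _ _ fun i hi => ?_)⟩
  rcases le_total 0 (m i) with hm | hm
  · exact hx₀P i (mem_filter.2 ⟨hi, hm⟩)
  · exact hx₀Q i (mem_filter.2 ⟨hi, hm⟩)

end Affine

section Tropical

variable {𝕜 ι : Type*} [Field 𝕜] [LinearOrder 𝕜] [IsStrictOrderedRing 𝕜]
  {S : Finset ι} (hS : S.Nonempty) (σ : ι → 𝕜)

def tropEval (a : ι → 𝕜) (x : 𝕜) : 𝕜 := S.inf' hS fun i => a i + σ i * x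

def IsLeastCoeff (a : ι → 𝕜) (j : ι) : Prop := ∃ x₀, tropEval hS σ a x₀ = a j + σ j * x₀

variable {hS σ}

theorem IsLeastCoeff.le_of_tropEval_le {b b' : ι → 𝕜} {j : ι} (h : IsLeastCoeff hS σ b j)
    (hj : j ∈ S) (hle : ∀ x, tropEval hS σ b x ≤ tropEval hS σ b' x) : b j ≤ b' j := by
  obtain ⟨x₁, hx₁⟩ := h
  have : tropEval hS σ b' x₁ ≤ b' j + σ j * x₁ := inf'_le _ hj
  linarith [hle x₁]

theorem IsLeastCoeff.eq_of_tropEval_eq {b b' : ι → 𝕜} {j : ι} (h : IsLeastCoeff hS σ b j)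
    (h' : IsLeastCoeff hS σ b' j) (hj : j ∈ S) (heq : ∀ x, tropEval hS σ b x = tropEval hS σ b' x) :
    b j = b' j :=
  le_antisymm (h.le_of_tropEval_le hj fun x => (heq x).le)
    (h'.le_of_tropEval_le hj fun x => (heq x).ge)

variable (hS σ)

theorem tropEval_sub_mul (a : ι → 𝕜) (k x : 𝕜) :
    tropEval hS σ a x - k * x = S.inf' hS fun i => a i + (σ i - k) * x := by
  refine (map_finset_inf' (OrderIso.subRight (k * x)) hS _).trans
    (congrArg (S.inf' hS) (funext fun i => ?_))
  simp only [Function.comp_apply, OrderIso.subRight_apply]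
  ring

theorem exists_forall_tropEval_sub_le (a : ι → 𝕜) {j : ι} (hj : j ∈ S) :
    ∃ x₀, ∀ x, tropEval hS σ a x - σ j * x ≤ tropEval hS σ a x₀ - σ j * x₀ := by
  simp only [tropEval_sub_mul]
  exact exists_forall_inf'_affine_le S hS a _ ⟨j, hj, (sub_self _).ge⟩ ⟨j, hj, (sub_self _).le⟩

theorem exists_isLeastCoeff_tropEval_eq (a : ι → 𝕜) :
    ∃ b : ι → 𝕜, (∀ j ∈ S, IsLeastCoeff hS σ b j) ∧ ∀ x, tropEval hS σ b x = tropEval hS σ a x := by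
  choose! X hX using fun j (hj : j ∈ S) => exists_forall_tropEval_sub_le hS σ a hj
  set b : ι → 𝕜 := fun j => tropEval hS σ a (X j) - σ j * X j
  have hle_b : ∀ j ∈ S, ∀ x, tropEval hS σ a x ≤ b j + σ j * x := fun j hj x => by
    linarith [hX j hj x]
  have hb_le : ∀ j ∈ S, b j ≤ a j := fun j hj => by
    have : tropEval hS σ a (X j) ≤ a j + σ j * X j := inf'_le _ hj
    linarith
  have heq : ∀ x, tropEval hS σ b x = tropEval hS σ a x := fun x =>
    le_antisymm (le_inf' _ _ fun i hi => (inf'_le _ hi).trans (by linarith [hb_le i hi]))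
      (le_inf' _ _ fun i hi => hle_b i hi x)
  exact ⟨b, fun j _ => ⟨X j, by rw [heq]; exact (sub_add_cancel _ _).symm⟩, heq⟩

end Tropical

/-- Every tropical polynomial function has a unique least-coefficient representative. -/
theorem exists_unique_lcp (r n : ℤ) (hrn : r ≤ n) (a : ℤ → ℚ) :
    ∃ b : ℤ → ℚ,
      ((∀ j ∈ Finset.Icc r n, ∃ x₀ : ℚ,
          (Finset.Icc r n).inf' (Finset.nonempty_Icc.mpr hrn)
            (fun i => b i + (i : ℚ) * x₀) = b j + (j : ℚ) * x₀) ∧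
        (∀ x : ℚ,
          (Finset.Icc r n).inf' (Finset.nonempty_Icc.mpr hrn)
            (fun i => b i + (i : ℚ) * x) =
          (Finset.Icc r n).inf' (Finset.nonempty_Icc.mpr hrn)
            (fun i => a i + (i : ℚ) * x))) ∧
      ∀ b' : ℤ → ℚ,
        ((∀ j ∈ Finset.Icc r n, ∃ x₀ : ℚ,
            (Finset.Icc r n).inf' (Finset.nonempty_Icc.mpr hrn)
              (fun i => b' i + (i : ℚ) * x₀) = b' j + (j : ℚ) * x₀) ∧
          (∀ x : ℚ,
            (Finset.Icc r n).inf' (Finset.nonempty_Icc.mpr hrn)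
              (fun i => b' i + (i : ℚ) * x) =
            (Finset.Icc r n).inf' (Finset.nonempty_Icc.mpr hrn)
              (fun i => a i + (i : ℚ) * x))) →
        ∀ j ∈ Finset.Icc r n, b' j = b j := by
  obtain ⟨b, hb_least, hb⟩ :=
    exists_isLeastCoeff_tropEval_eq (Finset.nonempty_Icc.mpr hrn) ((↑) : ℤ → ℚ) a
  exact ⟨b, ⟨hb_least, hb⟩, fun b' ⟨hb'_least, hb'⟩ j hj =>
    IsLeastCoeff.eq_of_tropEval_eq (hb'_least j hj) (hb_least j hj) hj fun x => (hb' x).trans (hb x).symm⟩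
end

section
/- Let a_r, ..., a_n ∈ ℚ be coefficients whose consecutive differences d_i = a_{i−1} − a_i are non-decreasing as i decreases, i.e., a_n − a_{n−1} ≥ a_{n−1} − a_{n−2} ≥ ... (equivalently d_n ≤ d_{n−1} ≤ ... ≤ d_{r+1}). Then for each i with r < i < n, setting x₀ = (a_{i−1} − a_{i+1})/2, the minimum min_k (a_k + k·x₀) is attained at k = i. -/
/-!
Concavity makes the differences `a (k - 1) - a k` decrease in `k`. Hence for any slope `x` between
the two differences `a i - a (i + 1) ≤ x ≤ a (i - 1) - a i` around `i`, each step of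
`k ↦ a k + k * x` is `≤ 0` left of `i` and `≥ 0` right of `i`; the midpoint `x₀` is such a slope.
-/

open Set

lemma IsMinOn.finset_inf'_eq {α β : Type*} [SemilatticeInf β] {s : Finset α} (hs : s.Nonempty)
    {f : α → β} {i : α} (hi : i ∈ s) (h : IsMinOn f s i) : s.inf' hs f = f i :=
  le_antisymm (Finset.inf'_le f hi) (Finset.le_inf' hs f fun _ hk => h hk)

section

variable {K : Type*} [Field K] [LinearOrder K] [IsStrictOrderedRing K]

lemma antitoneOn_sub_of_concave {r n : ℤ} {a : ℤ → K}
    (hconc : ∀ i : ℤ, r < i → i < n → a (i - 1) - a i ≥ a i - a (i + 1)) :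
    AntitoneOn (fun k => a (k - 1) - a k) (Icc (r + 1) n) :=
  antitoneOn_of_add_one_le ordConnected_Icc fun k _ hk hk1 => by
    simpa using hconc k (by linarith [hk.1]) (by linarith [hk1.2])

lemma monotoneOn_add_mul_of_sub_le {i n : ℤ} {a : ℤ → K} {x : K}
    (h : ∀ k ∈ Icc (i + 1) n, a (k - 1) - a k ≤ x) :
    MonotoneOn (fun k : ℤ => a k + k * x) (Icc i n) :=
  monotoneOn_of_le_add_one ordConnected_Icc fun k _ hk hk1 => by
    have hk1x := h (k + 1) ⟨by linarith [hk.1], hk1.2⟩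
    simp only [add_sub_cancel_right] at hk1x
    push_cast
    linarith

lemma antitoneOn_add_mul_of_le_sub {r i : ℤ} {a : ℤ → K} {x : K}
    (h : ∀ k ∈ Icc (r + 1) i, x ≤ a (k - 1) - a k) :
    AntitoneOn (fun k : ℤ => a k + k * x) (Icc r i) :=
  antitoneOn_of_le_sub_one ordConnected_Icc fun k _ hk hk1 => by
    have hkx := h k ⟨by linarith [hk1.1], hk.2⟩
    push_cast
    linarith

lemma isMinOn_add_mul_of_concave {r n i : ℤ} {a : ℤ → K} {x : K}
    (hconc : ∀ i : ℤ, r < i → i < n → a (i - 1) - a i ≥ a i - a (i + 1))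
    (hri : r < i) (hin : i < n) (hleft : x ≤ a (i - 1) - a i) (hright : a i - a (i + 1) ≤ x) :
    IsMinOn (fun k : ℤ => a k + k * x) (Icc r n) i := by
  have hanti := antitoneOn_sub_of_concave hconc
  refine isMinOn_Icc_of_anti_mono (antitoneOn_add_mul_of_le_sub fun k ⟨hrk, hki⟩ => ?_)
    (monotoneOn_add_mul_of_sub_le fun k ⟨hik, hkn⟩ => ?_)
  · exact hleft.trans (hanti ⟨hrk, by omega⟩ ⟨by omega, hin.le⟩ hki)
  · have hstep := hanti ⟨by omega, by omega⟩ ⟨by omega, hkn⟩ hik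
    simp only [add_sub_cancel_right] at hstep
    exact hstep.trans hright

end

/-- Under the concavity condition, the minimum at `x₀ = (a (i-1) - a (i+1))/2`
is attained at index `i`. -/
theorem concave_min_attained (r n : ℤ) (hrn : r ≤ n) (a : ℤ → ℚ)
    (hconc : ∀ i : ℤ, r < i → i < n → a (i - 1) - a i ≥ a i - a (i + 1)) :
    ∀ i : ℤ, r < i → i < n →
      (Finset.Icc r n).inf' (Finset.nonempty_Icc.mpr hrn)
        (fun k => a k + (k : ℚ) * ((a (i - 1) - a (i + 1)) / 2)) =
      a i + (i : ℚ) * ((a (i - 1) - a (i + 1)) / 2) := by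
  intro i hri hin
  have hi := hconc i hri hin
  refine IsMinOn.finset_inf'_eq _ (Finset.mem_Icc.mpr ⟨hri.le, hin.le⟩) ?_
  rw [Finset.coe_Icc]
  exact isMinOn_add_mul_of_concave hconc hri hin (by linarith) (by linarith)
end

section
/- A tropical polynomial with finite rational coefficients a_r, ..., a_n is a least-coefficient polynomial if and only if its consecutive differences are concave: a_{i−1} − a_i ≥ a_i − a_{i+1} for all i with r < i < n (equivalently, 2·a_i ≤ a_{i−1} + a_{i+1}). -/
/-!
Write `d k = a (k - 1) - a k`. The term `a i + i * x` is minimised at `i = j` on `[r, n]` exactly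
when it decreases up to `j` and increases after it, i.e. `x ≤ d k` for `k ≤ j` and `d k ≤ x`
for `k > j`. Comparing with the neighbours `j ± 1` gives `d (j + 1) ≤ x ≤ d j`, hence concavity.
Conversely, concavity makes `d` antitone on `[r + 1, n]`, so `x = d (j + 1)` (or `x = d n` when
`j = n`) separates the slopes left of `j` from those right of it.
-/

open Set

theorem Finset.inf'_eq_iff_isMinOn {ι α : Type*} [SemilatticeInf α] {s : Finset ι}
    (H : s.Nonempty) {f : ι → α} {j : ι} (hj : j ∈ s) :
    s.inf' H f = f j ↔ IsMinOn f s j := by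
  rw [isMinOn_iff]
  exact ⟨fun h i hi => h ▸ Finset.inf'_le f hi,
    fun h => le_antisymm (Finset.inf'_le f hj) (Finset.le_inf' H f h)⟩

namespace TropicalPolynomial

variable {a : ℤ → ℚ} {r n j : ℤ} {x : ℚ}

theorem antitoneOn_sub_of_concave
    (hc : ∀ i : ℤ, r < i → i < n → a (i - 1) - a i ≥ a i - a (i + 1)) :
    AntitoneOn (fun k => a (k - 1) - a k) (Icc (r + 1) n) := by
  refine antitoneOn_of_succ_le ordConnected_Icc fun k _ hk hk1 => ?_
  rw [Order.succ_eq_add_one] at hk1 ⊢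
  simpa using hc k (by linarith [hk.1]) (by linarith [hk1.2])

theorem antitoneOn_add_mul_of_le_sub (h : ∀ k ∈ Icc (r + 1) j, x ≤ a (k - 1) - a k) :
    AntitoneOn (fun i => a i + i * x) (Icc r j) := by
  refine antitoneOn_of_succ_le ordConnected_Icc fun k _ hk hk1 => ?_
  rw [Order.succ_eq_add_one] at hk1 ⊢
  have := h (k + 1) ⟨by linarith [hk.1], hk1.2⟩
  simp only [add_sub_cancel_right] at this
  push_cast
  linarith

theorem monotoneOn_add_mul_of_sub_le (h : ∀ k ∈ Ico j n, a k - a (k + 1) ≤ x) :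
    MonotoneOn (fun i => a i + i * x) (Icc j n) := by
  refine monotoneOn_of_le_succ ordConnected_Icc fun k _ hk hk1 => ?_
  rw [Order.succ_eq_add_one] at hk1 ⊢
  have := h k ⟨hk.1, by linarith [hk1.2]⟩
  push_cast
  linarith

theorem isMinOn_add_mul_of_slopes (hdown : ∀ k ∈ Icc (r + 1) j, x ≤ a (k - 1) - a k)
    (hup : ∀ k ∈ Ico j n, a k - a (k + 1) ≤ x) :
    IsMinOn (fun i => a i + i * x) (Icc r n) j := by
  rw [isMinOn_iff]
  rintro i ⟨hri, hin⟩
  rcases le_total i j with hij | hji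
  · exact antitoneOn_add_mul_of_le_sub hdown ⟨hri, hij⟩ ⟨hri.trans hij, le_rfl⟩ hij
  · exact monotoneOn_add_mul_of_sub_le hup ⟨le_rfl, hji.trans hin⟩ ⟨hji, hin⟩ hji

theorem le_sub_of_isMinOn_add_mul (h : IsMinOn (fun i => a i + i * x) (Icc r n) j)
    (hrj : r < j) (hjn : j ≤ n) : x ≤ a (j - 1) - a j := by
  have := isMinOn_iff.1 h (j - 1) ⟨by omega, by omega⟩
  push_cast at this
  linarith

theorem sub_le_of_isMinOn_add_mul (h : IsMinOn (fun i => a i + i * x) (Icc r n) j)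
    (hrj : r ≤ j) (hjn : j < n) : a j - a (j + 1) ≤ x := by
  have := isMinOn_iff.1 h (j + 1) ⟨by omega, by omega⟩
  push_cast at this
  linarith

theorem exists_isMinOn_add_mul_of_concave
    (hc : ∀ i : ℤ, r < i → i < n → a (i - 1) - a i ≥ a i - a (i + 1)) (hj : j ∈ Icc r n) :
    ∃ x : ℚ, IsMinOn (fun i => a i + i * x) (Icc r n) j := by
  have hd := antitoneOn_sub_of_concave hc
  obtain ⟨hrj, hjn⟩ := hj
  rcases lt_or_eq_of_le hjn with hjn | rfl
  · refine ⟨a j - a (j + 1), isMinOn_add_mul_of_slopes (fun k ⟨hk₁, hk₂⟩ => ?_)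
      (fun k ⟨hk₁, hk₂⟩ => ?_)⟩
    · simpa using hd ⟨hk₁, by omega⟩ ⟨by omega, by omega⟩ (by omega : k ≤ j + 1)
    · simpa using hd ⟨by omega, by omega⟩ ⟨by omega, by omega⟩ (by omega : j + 1 ≤ k + 1)
  · refine ⟨a (j - 1) - a j, isMinOn_add_mul_of_slopes (fun k hk => ?_) (fun k hk => ?_)⟩
    · exact hd hk ⟨hk.1.trans hk.2, le_rfl⟩ hk.2
    · exact absurd hk.2 (not_lt.2 hk.1)

end TropicalPolynomial

open TropicalPolynomial

/-- A tropical polynomial is a least-coefficient polynomial iff its consecutive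
differences are concave. -/
theorem lcp_iff_concave (r n : ℤ) (hrn : r ≤ n) (a : ℤ → ℚ) :
    (∀ j ∈ Finset.Icc r n, ∃ x₀ : ℚ,
      (Finset.Icc r n).inf' (Finset.nonempty_Icc.mpr hrn)
        (fun i => a i + (i : ℚ) * x₀) = a j + (j : ℚ) * x₀) ↔
    (∀ i : ℤ, r < i → i < n → a (i - 1) - a i ≥ a i - a (i + 1)) := by
  have least_iff : ∀ j ∈ Finset.Icc r n, ∀ x : ℚ,
      (Finset.Icc r n).inf' (Finset.nonempty_Icc.mpr hrn) (fun i => a i + (i : ℚ) * x)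
        = a j + j * x ↔ IsMinOn (fun i => a i + i * x) (Icc r n) j := fun j hj x => by
    rw [Finset.inf'_eq_iff_isMinOn _ hj, Finset.coe_Icc]
  constructor
  · intro h i hri hin
    obtain ⟨x, hx⟩ := h i (Finset.mem_Icc.2 ⟨hri.le, hin.le⟩)
    have hmin := (least_iff i (Finset.mem_Icc.2 ⟨hri.le, hin.le⟩) x).1 hx
    linarith [le_sub_of_isMinOn_add_mul hmin hri hin.le,
      sub_le_of_isMinOn_add_mul hmin hri.le hin]
  · intro hc j hj
    obtain ⟨x, hx⟩ := exists_isMinOn_add_mul_of_concave hc (Finset.mem_Icc.1 hj)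
    exact ⟨x, (least_iff j hj x).2 hx⟩
end

section
/- The tropical factorization of a least-coefficient polynomial is unique: if a_r, ..., a_n ∈ ℚ and c ∈ ℚ, d'_n ≤ d'_{n−1} ≤ ... ≤ d'_{r+1} are rationals such that for all x ∈ ℚ, min_{r ≤ i ≤ n} (a_i + i·x) = c + r·x + Σ_{i=r+1}^{n} min(x, d'_i), and the a_i satisfy the concavity condition a_{i−1} − a_i ≥ a_i − a_{i+1}, then c = a_n and d'_i = a_{i−1} − a_i for all i. -/
/-!
Concavity makes the differences `a (i - 1) - a i` antitone, and then an induction on `n` shows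
that the tropical polynomial already factors with these breakpoints:
`min_i (a i + i x) = a n + r x + ∑ i, min x (a (i - 1) - a i)`.
It remains to see that `c` and an antitone family `d` are determined by the function
`x ↦ c + ∑ i, min x (d i)`: below all breakpoints it is `c + (n - r) x`, and the largest
breakpoint is the least `x` beyond which it is constant, which recovers the breakpoints one by one
from the top.
-/

open Finset

section SumMin

variable {ι α : Type*} [AddCommMonoid α] [LinearOrder α] {s : Finset ι} {d e : ι → α}

lemma sum_min_of_forall_le {x : α} (hx : ∀ i ∈ s, x ≤ d i) :
    ∑ i ∈ s, min x (d i) = #s • x := by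
  rw [← sum_const]
  exact sum_congr rfl fun i hi => min_eq_left (hx i hi)

lemma sum_min_of_forall_ge {x : α} (hx : ∀ i ∈ s, d i ≤ x) :
    ∑ i ∈ s, min x (d i) = ∑ i ∈ s, d i :=
  sum_congr rfl fun i hi => min_eq_right (hx i hi)

variable [IsOrderedCancelAddMonoid α]

lemma eq_of_forall_add_sum_min_eq {c c' : α}
    (h : ∀ x, c + ∑ i ∈ s, min x (d i) = c' + ∑ i ∈ s, min x (e i)) : c = c' := by
  obtain ⟨x, hx⟩ := (s.image d ∪ s.image e).bddBelow
  have hd : ∀ i ∈ s, x ≤ d i := fun i hi => hx (mem_union_left _ (mem_image_of_mem d hi))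
  have he : ∀ i ∈ s, x ≤ e i := fun i hi => hx (mem_union_right _ (mem_image_of_mem e hi))
  simpa [sum_min_of_forall_le hd, sum_min_of_forall_le he] using h x

lemma le_of_forall_sum_min_eq {i₀ : ι} (hi₀ : i₀ ∈ s) (hd : ∀ i ∈ s, d i ≤ d i₀)
    (he : ∀ i ∈ s, e i ≤ e i₀) (h : ∀ x, ∑ i ∈ s, min x (d i) = ∑ i ∈ s, min x (e i)) :
    d i₀ ≤ e i₀ := by
  by_contra! hlt
  have := calc
    ∑ i ∈ s, d i = ∑ i ∈ s, min (d i₀) (d i) := (sum_min_of_forall_ge hd).symm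
    _ = ∑ i ∈ s, min (d i₀) (e i) := h _
    _ = ∑ i ∈ s, min (e i₀) (e i) := by
      rw [sum_min_of_forall_ge fun i hi => (he i hi).trans hlt.le, sum_min_of_forall_ge he]
    _ = ∑ i ∈ s, min (e i₀) (d i) := (h _).symm
    _ < ∑ i ∈ s, d i :=
      sum_lt_sum (fun i _ => min_le_right _ _) ⟨i₀, hi₀, by simpa using hlt⟩
  exact this.false

lemma eqOn_of_forall_sum_min_eq [LinearOrder ι] (hd : AntitoneOn d s) (he : AntitoneOn e s)
    (h : ∀ x, ∑ i ∈ s, min x (d i) = ∑ i ∈ s, min x (e i)) : Set.EqOn d e s := by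
  classical
  induction s using Finset.induction_on_min with
  | empty => simp
  | insert j s hj ih =>
    have hj' : j ∉ s := fun hmem => (hj j hmem).false
    have hmax {f : ι → α} (hf : AntitoneOn f ↑(insert j s)) : ∀ i ∈ insert j s, f i ≤ f j :=
      fun i hi => hf (by simp) hi (by
        rcases mem_insert.1 hi with rfl | hi
        · rfl
        · exact (hj i hi).le)
    have hhead : d j = e j := le_antisymm
      (le_of_forall_sum_min_eq (mem_insert_self j s) (hmax hd) (hmax he) h)
      (le_of_forall_sum_min_eq (mem_insert_self j s) (hmax he) (hmax hd) fun x => (h x).symm)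
    have htail : Set.EqOn d e s := by
      refine ih (hd.mono (by simp)) (he.mono (by simp)) fun x => ?_
      have := h x
      rwa [sum_insert hj', sum_insert hj', hhead, add_left_cancel_iff] at this
    intro i hi
    rcases mem_insert.1 hi with rfl | hi
    · exact hhead
    · exact htail hi

end SumMin

lemma Int.natCast_card_Icc_add_one_left {α : Type*} [AddCommGroupWithOne α] {r m : ℤ}
    (h : r ≤ m) : (#(Icc (r + 1) m) : α) = m - r := by
  have := congrArg (Int.cast : ℤ → α) (Int.card_Icc_of_le (a := r + 1) (b := m) (by omega))
  push_cast at this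
  rw [this]; abel

lemma inf'_Icc_add_mul_eq_add_sum_min {α : Type*} [Field α] [LinearOrder α]
    [IsStrictOrderedRing α] {a : ℤ → α} {r n : ℤ} (hrn : r ≤ n)
    (ha : AntitoneOn (fun i => a (i - 1) - a i) (Set.Icc (r + 1) n)) (x : α) :
    (Icc r n).inf' (nonempty_Icc.2 hrn) (fun i => a i + i * x) =
      a n + r * x + ∑ i ∈ Icc (r + 1) n, min x (a (i - 1) - a i) := by
  induction n, hrn using Int.leInduction with
  | base => simp
  | succ m hm ih =>
    have hle_top : ∀ i ∈ Icc (r + 1) m, a m - a (m + 1) ≤ a (i - 1) - a i := fun i hi => by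
      have hi := mem_Icc.1 hi
      simpa using ha ⟨by omega, by omega⟩ ⟨by omega, by omega⟩ (by omega : i ≤ m + 1)
    rw [inf'_congr _ (insert_Icc_right_eq_Icc_add_one (by omega)).symm (fun _ _ => rfl),
      inf'_insert (H := nonempty_Icc.2 hm), ih (ha.mono (Set.Icc_subset_Icc le_rfl (by omega))),
      ← insert_Icc_right_eq_Icc_add_one (by omega), sum_insert (by simp), add_sub_cancel_right]
    have hcard := Int.natCast_card_Icc_add_one_left (α := α) hm
    rcases le_or_gt x (a m - a (m + 1)) with hx | hx
    · have hS := sum_min_of_forall_le fun i hi => hx.trans (hle_top i hi)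
      rw [hS, nsmul_eq_mul, hcard, min_eq_left hx, min_eq_left (by push_cast; linarith)]
      push_cast; ring
    · have hS := sum_le_card_nsmul (Icc (r + 1) m) (fun i => min x (a (i - 1) - a i)) x
        fun i _ => min_le_left _ _
      rw [nsmul_eq_mul, hcard] at hS
      rw [min_eq_right hx.le, min_eq_right (by push_cast; linarith)]
      ring

/-- Uniqueness of the tropical factorization of a least-coefficient polynomial. -/
theorem tropical_factorization_unique (r n : ℤ) (hrn : r ≤ n) (a : ℤ → ℚ)
    (hconc : ∀ i : ℤ, r < i → i < n → a (i - 1) - a i ≥ a i - a (i + 1))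
    (c : ℚ) (d' : ℤ → ℚ)
    (hd' : ∀ i j : ℤ, r + 1 ≤ i → i ≤ j → j ≤ n → d' j ≤ d' i)
    (hfac : ∀ x : ℚ,
      (Finset.Icc r n).inf' (Finset.nonempty_Icc.mpr hrn)
        (fun i => a i + (i : ℚ) * x) =
      c + (r : ℚ) * x + ∑ i ∈ Finset.Icc (r + 1) n, min x (d' i)) :
    c = a n ∧ ∀ i ∈ Finset.Icc (r + 1) n, d' i = a (i - 1) - a i := by
  have hδ : AntitoneOn (fun i => a (i - 1) - a i) (Set.Icc (r + 1) n) :=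
    antitoneOn_of_add_one_le Set.ordConnected_Icc fun i _ hi hi' => by
      simpa using hconc i hi.1 hi'.2
  have hd'_anti : AntitoneOn d' (Set.Icc (r + 1) n) :=
    fun i hi j hj hij => hd' i j hi.1 hij hj.2
  have hsum (x : ℚ) : c + ∑ i ∈ Icc (r + 1) n, min x (d' i) =
      a n + ∑ i ∈ Icc (r + 1) n, min x (a (i - 1) - a i) := by
    have := (hfac x).symm.trans (inf'_Icc_add_mul_eq_add_sum_min hrn hδ x)
    linarith
  have hc : c = a n := eq_of_forall_add_sum_min_eq hsum
  have hd : Set.EqOn d' (fun i => a (i - 1) - a i) ↑(Icc (r + 1) n) :=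
    eqOn_of_forall_sum_min_eq (by simpa using hd'_anti) (by simpa using hδ) fun x => by
      simpa [hc] using hsum x
  exact ⟨hc, fun i hi => hd hi⟩
end

section
/- Expanding the tropical product: for c ∈ ℚ and d_n ≤ d_{n−1} ≤ ... ≤ d_{r+1} in ℚ, the function x ↦ c + r·x + Σ_{i=r+1}^{n} min(x, d_i) equals x ↦ min_{r ≤ j ≤ n} (b_j + j·x) where b_j = c + d_n + d_{n−1} + ... + d_{j+1} (and b_n = c). -/
/-!
Writing `j * x = r * x + ∑_{r < i ≤ j} x`, the `j`-th term `b_j + j * x` is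
`c + r * x + ∑_{r < i ≤ j} x + ∑_{j < i ≤ n} d i`, which dominates the left-hand side term by
term because `min x (d i)` is at most both `x` and `d i`. Since `d` is non-increasing, the
indices `i` with `x ≤ d i` form an initial segment `(r, k]`, and for that `k` the two sums match
`min x (d i)` exactly, so the minimum is attained.
-/

open Finset

section SumMin

variable {ι α : Type*} [AddCommMonoid α] [LinearOrder α] (s : Finset ι) (f g : ι → α)

theorem Finset.sum_min_le_sum_filter_add_sum_filter_not [IsOrderedAddMonoid α]
    (p : ι → Prop) [DecidablePred p] :
    ∑ i ∈ s, min (f i) (g i) ≤ ∑ i ∈ s with p i, f i + ∑ i ∈ s with ¬p i, g i := by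
  rw [← sum_filter_add_sum_filter_not s p]
  gcongr
  · exact min_le_left _ _
  · exact min_le_right _ _

theorem Finset.sum_min_eq_sum_filter_add_sum_filter_not :
    ∑ i ∈ s, min (f i) (g i) = ∑ i ∈ s with f i ≤ g i, f i + ∑ i ∈ s with ¬f i ≤ g i, g i := by
  rw [← sum_filter_add_sum_filter_not s (fun i => f i ≤ g i)]
  congr 1 <;> refine sum_congr rfl fun i hi => ?_
  · exact min_eq_left (mem_filter.mp hi).2
  · exact min_eq_right (le_of_not_ge (mem_filter.mp hi).2)

end SumMin

theorem Finset.filter_le_Icc {α : Type*} [LinearOrder α] [LocallyFiniteOrder α] {a b j : α}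
    (hj : j ≤ b) : {i ∈ Icc a b | i ≤ j} = Icc a j := by
  ext i
  simp only [mem_filter, mem_Icc]
  exact ⟨fun h => ⟨h.1.1, h.2⟩, fun h => ⟨⟨h.1, h.2.trans hj⟩, h.2⟩⟩

namespace Int

theorem filter_not_le_Icc {a b j : ℤ} (hj : a ≤ j + 1) :
    {i ∈ Icc a b | ¬i ≤ j} = Icc (j + 1) b := by
  ext i
  simp only [mem_filter, mem_Icc]
  omega

theorem sum_Icc_add_one_const {R : Type*} [Ring R] {a b : ℤ} (hab : a ≤ b) (x : R) :
    ∑ _i ∈ Icc (a + 1) b, x = ((b - a : ℤ) : R) * x := by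
  rw [sum_const, card_Icc, nsmul_eq_mul, ← Int.cast_natCast, Int.toNat_of_nonneg (by omega)]
  ring_nf

theorem exists_threshold_of_antitoneOn_Icc {α : Type*} [LinearOrder α] {r n : ℤ} (hrn : r ≤ n)
    {d : ℤ → α} (hd : AntitoneOn d (Icc (r + 1) n)) (x : α) :
    ∃ k ∈ Icc r n, ∀ i ∈ Icc (r + 1) n, x ≤ d i ↔ i ≤ k := by
  set S := {i ∈ Icc (r + 1) n | x ≤ d i}
  obtain ⟨k, hk, hk_max⟩ : ∃ k ∈ insert r S, ∀ i ∈ insert r S, i ≤ k :=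
    ⟨_, max'_mem _ (insert_nonempty r S), fun i hi => le_max' _ _ hi⟩
  have hrk : r ≤ k := hk_max r (mem_insert_self r S)
  refine ⟨k, ?_, fun i hi => ⟨fun hxi => hk_max i (mem_insert_of_mem (mem_filter.mpr ⟨hi, hxi⟩)),
    fun hik => ?_⟩⟩ <;> obtain rfl | hkS := mem_insert.mp hk
  · exact left_mem_Icc.mpr hrn
  · exact mem_Icc.mpr ⟨hrk, (mem_Icc.mp (mem_filter.mp hkS).1).2⟩
  · exact absurd hik (by have := (mem_Icc.mp hi).1; omega)
  · obtain ⟨hkI, hxk⟩ := mem_filter.mp hkS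
    exact hxk.trans (hd hi hkI hik)

end Int

/-- Expanding a tropical product of linear factors with sorted roots gives the
tropical polynomial with coefficients `b j = c + ∑_{i=j+1}^n d i`. -/
theorem tropical_product_expansion (r n : ℤ) (hrn : r ≤ n) (c : ℚ) (d : ℤ → ℚ)
    (hd : ∀ i j : ℤ, r + 1 ≤ i → i ≤ j → j ≤ n → d j ≤ d i) :
    ∀ x : ℚ,
      c + (r : ℚ) * x + ∑ i ∈ Finset.Icc (r + 1) n, min x (d i) =
      (Finset.Icc r n).inf' (Finset.nonempty_Icc.mpr hrn)
        (fun j => (c + ∑ i ∈ Finset.Icc (j + 1) n, d i) + (j : ℚ) * x) := by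
  intro x
  have term_eq : ∀ j ∈ Icc r n, (c + ∑ i ∈ Icc (j + 1) n, d i) + (j : ℚ) * x =
      c + r * x + (∑ i ∈ Icc (r + 1) n with i ≤ j, x + ∑ i ∈ Icc (r + 1) n with ¬i ≤ j, d i) := by
    intro j hj
    obtain ⟨hrj, hjn⟩ := mem_Icc.mp hj
    rw [filter_le_Icc hjn, Int.filter_not_le_Icc (by omega), Int.sum_Icc_add_one_const hrj]
    push_cast
    ring
  obtain ⟨k, hk, hsplit⟩ := Int.exists_threshold_of_antitoneOn_Icc hrn
    (fun i hi j hj hij => hd i j (mem_Icc.mp hi).1 hij (mem_Icc.mp hj).2) x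
  refine le_antisymm (le_inf' _ _ fun j hj => ?_) ?_
  · rw [term_eq j hj]
    gcongr
    exact sum_min_le_sum_filter_add_sum_filter_not _ _ _ _
  · calc _ ≤ _ := inf'_le _ hk
      _ = c + r * x + (∑ i ∈ Icc (r + 1) n with x ≤ d i, x
          + ∑ i ∈ Icc (r + 1) n with ¬x ≤ d i, d i) := by
          rw [term_eq k hk, filter_congr hsplit, filter_congr fun i hi => not_congr (hsplit i hi)]
      _ = _ := by rw [sum_min_eq_sum_filter_add_sum_filter_not]
end

section
/- Let a_r, ..., a_n ∈ ℚ satisfy the concavity condition a_{i−1} − a_i ≥ a_i − a_{i+1} for r < i < n, and let d ∈ ℚ. If d = a_{i−1} − a_i for some i with r < i ≤ n, then at x = d the minimum min_k (a_k + k·d) is attained simultaneously at the indices k = i and k = i−1. -/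
/-!
Concavity says the slopes `a (k - 1) - a k` decrease in `k`. The increment of
`k ↦ a k + k * d` from `k` to `k + 1` is `d` minus the slope at `k + 1`, so for `d` equal to
the slope at `i` this function decreases up to `i` and increases from `i` on: its minimum is
at `i`, and its values at `i - 1` and `i` agree by the choice of `d`.
-/

open Finset

theorem Finset.inf'_Icc_eq_of_antitoneOn_of_monotoneOn {α β : Type*} [LinearOrder α]
    [LocallyFiniteOrder α] [SemilatticeInf β] {f : α → β} {r i n : α} (hri : r ≤ i) (hin : i ≤ n)
    (hanti : AntitoneOn f (Set.Icc r i)) (hmono : MonotoneOn f (Set.Icc i n))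
    (hne : (Finset.Icc r n).Nonempty) :
    (Finset.Icc r n).inf' hne f = f i := by
  refine le_antisymm (inf'_le _ (Finset.mem_Icc.mpr ⟨hri, hin⟩)) (le_inf' _ _ fun k hk => ?_)
  obtain ⟨hrk, hkn⟩ := Finset.mem_Icc.mp hk
  rcases le_total k i with hki | hik
  · exact hanti ⟨hrk, hki⟩ ⟨hri, le_rfl⟩ hki
  · exact hmono ⟨le_rfl, hin⟩ ⟨hik, hkn⟩ hik

theorem antitoneOn_slope_of_concave {r n : ℤ} {a : ℤ → ℚ}
    (hconc : ∀ i : ℤ, r < i → i < n → a (i - 1) - a i ≥ a i - a (i + 1)) :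
    AntitoneOn (fun k => a (k - 1) - a k) (Set.Icc (r + 1) n) := by
  refine antitoneOn_of_add_one_le Set.ordConnected_Icc fun k _ hk hk1 => ?_
  simpa using hconc k (by linarith [hk.1]) (by linarith [hk1.2])

/-- At a consecutive difference `d = a (i-1) - a i` of a least-coefficient
polynomial, the minimum is attained at both `i` and `i - 1`. -/
theorem root_attains_min_twice (r n : ℤ) (hrn : r ≤ n) (a : ℤ → ℚ)
    (hconc : ∀ i : ℤ, r < i → i < n → a (i - 1) - a i ≥ a i - a (i + 1))
    (i : ℤ) (hri : r < i) (hin : i ≤ n) (d : ℚ) (hd : d = a (i - 1) - a i) :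
    (Finset.Icc r n).inf' (Finset.nonempty_Icc.mpr hrn)
      (fun k => a k + (k : ℚ) * d) = a i + (i : ℚ) * d ∧
    (Finset.Icc r n).inf' (Finset.nonempty_Icc.mpr hrn)
      (fun k => a k + (k : ℚ) * d) = a (i - 1) + ((i : ℚ) - 1) * d := by
  have hslope := antitoneOn_slope_of_concave hconc
  have hi : i ∈ Set.Icc (r + 1) n := ⟨by omega, hin⟩
  have hanti : AntitoneOn (fun k : ℤ => a k + (k : ℚ) * d) (Set.Icc r i) := by
    refine antitoneOn_of_add_one_le Set.ordConnected_Icc fun k _ hk hk1 => ?_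
    have := hslope ⟨by linarith [hk.1], hk1.2.trans hin⟩ hi hk1.2
    simp only [add_sub_cancel_right] at this
    push_cast
    linarith
  have hmono : MonotoneOn (fun k : ℤ => a k + (k : ℚ) * d) (Set.Icc i n) := by
    refine monotoneOn_of_le_add_one Set.ordConnected_Icc fun k _ hk hk1 => ?_
    have := hslope hi ⟨by linarith [hri, hk.1], hk1.2⟩ (by linarith [hk.1])
    simp only [add_sub_cancel_right] at this
    push_cast
    linarith
  have hmin := Finset.inf'_Icc_eq_of_antitoneOn_of_monotoneOn hri.le hin hanti hmono
    (Finset.nonempty_Icc.mpr hrn)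
  exact ⟨hmin, hmin.trans (by rw [hd]; ring)⟩
end

section
/- Least coefficients are preserved under passing to the least-coefficient representative: if a_j is a least coefficient of the tropical polynomial f with coefficients a_r, ..., a_n, and b_j = min({a_j} ∪ {(a_i·(k−j) + a_k·(j−i))/(k−i) : r ≤ i < j < k ≤ n}), then b_j = a_j. -/
/-- The points `(i, aᵢ)`, `(k, aₖ)` lie above the line of slope `-x` through `(j, aⱼ)`,
hence so does their chord. -/
theorem le_chord_of_add_mul_le {K : Type*} [Field K] [LinearOrder K] [IsStrictOrderedRing K]
    {i j k aᵢ aⱼ aₖ x : K} (hij : i < j) (hjk : j < k)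
    (hi : aⱼ + j * x ≤ aᵢ + i * x) (hk : aⱼ + j * x ≤ aₖ + k * x) :
    aⱼ ≤ (aᵢ * (k - j) + aₖ * (j - i)) / (k - i) := by
  rw [le_div_iff₀ (by linarith)]
  nlinarith [mul_le_mul_of_nonneg_right hi (sub_nonneg.mpr hjk.le),
    mul_le_mul_of_nonneg_right hk (sub_nonneg.mpr hij.le)]

open Finset in
theorem least_coeff_fixed_by_formula_general (r n : ℤ) (hrn : r ≤ n) (a : ℤ → ℚ)
    (j : ℤ)
    (hleast : ∃ x₀ : ℚ,
      (Finset.Icc r n).inf' (Finset.nonempty_Icc.mpr hrn)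
        (fun i => a i + (i : ℚ) * x₀) = a j + (j : ℚ) * x₀) :
    (insert (a j)
      ((((Finset.Icc r n) ×ˢ (Finset.Icc r n)).filter
          (fun p => p.1 < j ∧ j < p.2)).image
        (fun p : ℤ × ℤ =>
          (a p.1 * ((p.2 : ℚ) - (j : ℚ)) + a p.2 * ((j : ℚ) - (p.1 : ℚ))) /
            ((p.2 : ℚ) - (p.1 : ℚ))))).min'
      (Finset.insert_nonempty _ _) = a j := by
  obtain ⟨x₀, hx₀⟩ := hleast
  have hmin : ∀ i ∈ Icc r n, a j + j * x₀ ≤ a i + i * x₀ := fun i hi =>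
    hx₀ ▸ inf'_le _ hi
  refine le_antisymm (min'_le _ _ (mem_insert_self _ _)) (le_min' _ _ _ ?_)
  simp only [mem_insert, mem_image, mem_filter, mem_product]
  rintro _ (rfl | ⟨⟨i, k⟩, ⟨⟨hi, hk⟩, hij, hjk⟩, rfl⟩)
  · exact le_rfl
  · exact le_chord_of_add_mul_le (by exact_mod_cast hij) (by exact_mod_cast hjk)
      (hmin i hi) (hmin k hk)

/-- If `a j` is a least coefficient, then the least-coefficient formula does
not change it. -/
theorem least_coeff_fixed_by_formula (r n : ℤ) (hrn : r ≤ n) (a : ℤ → ℚ)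
    (j : ℤ) (hj : j ∈ Finset.Icc r n)
    (hleast : ∃ x₀ : ℚ,
      (Finset.Icc r n).inf' (Finset.nonempty_Icc.mpr hrn)
        (fun i => a i + (i : ℚ) * x₀) = a j + (j : ℚ) * x₀) :
    (insert (a j)
      ((((Finset.Icc r n) ×ˢ (Finset.Icc r n)).filter
          (fun p => p.1 < j ∧ j < p.2)).image
        (fun p : ℤ × ℤ =>
          (a p.1 * ((p.2 : ℚ) - (j : ℚ)) + a p.2 * ((j : ℚ) - (p.1 : ℚ))) /
            ((p.2 : ℚ) - (p.1 : ℚ))))).min'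
      (Finset.insert_nonempty _ _) = a j :=
  least_coeff_fixed_by_formula_general r n hrn a j hleast
end
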